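/- arXiv:1010.3654 — 4 statements merged into one kernel-verified Lean document; each statement's English description precedes it below -/
import Mathlib

section
/- Let N ≥ 1 and let U be an N×N complex unitary matrix. If f, g : [N] → {−1,1} are chosen independently and uniformly at random (each of the 2^N sign functions equally likely, independently for f and g), then the expectation of the acceptance probability p_U(f,g) := |(1/N) ∑_{x,y∈[N]} g(y) · U_{y,x} · f(x)|² equals exactly 1/N. -/
/-!
Uniformly random sign vectors are orthonormal on average: `∑_f s_f(x) s_f(x') = 2^N δ_{x x'}`.
Hence averaging `|∑_y s_g(y) v_y|²` over `g` gives `‖v‖²` for every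
vector `v`. Averaging first over `g` and then over `f` turns the mean of `|⟨s_g, U s_f⟩|²` into
the squared Frobenius norm of `U`, which is `N` since every row of a unitary matrix is a unit
vector; the factor `1/N²` then leaves `1/N`.
-/

open Finset

def boolSign {R : Type*} [Ring R] (b : Bool) : R := if b then 1 else -1

section Signs

variable {R : Type*} [Ring R]

@[simp]
lemma boolSign_not (b : Bool) : (boolSign (!b) : R) = -boolSign b := by
  cases b <;> simp [boolSign]

@[simp]
lemma boolSign_mul_self (b : Bool) : (boolSign b : R) * boolSign b = 1 := by
  cases b <;> simp [boolSign]

variable {ι : Type*} [Fintype ι] [DecidableEq ι]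

theorem sum_boolSign_mul_boolSign (x x' : ι) :
    ∑ f : ι → Bool, (boolSign (f x) : R) * boolSign (f x') =
      if x = x' then 2 ^ Fintype.card ι else 0 := by
  split_ifs with h
  · subst h
    simp [Fintype.card_bool]
  · -- flipping the sign at `x` negates the summand
    refine sum_involution (fun f _ => Function.update f x (!f x)) (fun f _ => ?_)
      (fun f _ _ => ?_) (fun _ _ => mem_univ _) (fun f _ => ?_)
    · simp [Function.update_of_ne (Ne.symm h)]
    · simp
    · simp

end Signs

section Parseval

open ComplexConjugate

variable {𝕜 : Type*} [RCLike 𝕜]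

@[simp]
lemma conj_boolSign (b : Bool) : conj (boolSign b : 𝕜) = boolSign b := by
  cases b <;> simp [boolSign]

variable {ι : Type*} [Fintype ι] [DecidableEq ι]

theorem sum_norm_sq_sum_boolSign_mul (v : ι → 𝕜) :
    ∑ g : ι → Bool, ‖∑ y, boolSign (g y) * v y‖ ^ 2 = 2 ^ Fintype.card ι * ∑ y, ‖v y‖ ^ 2 := by
  apply (RCLike.ofReal_injective (K := 𝕜))
  push_cast
  simp only [← RCLike.mul_conj, map_sum, map_mul, conj_boolSign]
  calc ∑ g : ι → Bool, (∑ y, boolSign (g y) * v y) * ∑ y', boolSign (g y') * conj (v y')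
      = ∑ y, ∑ y', (∑ g : ι → Bool, (boolSign (g y) : 𝕜) * boolSign (g y')) *
          (v y * conj (v y')) := by
        simp_rw [sum_mul_sum, sum_mul]
        rw [sum_comm]
        refine sum_congr rfl fun y _ => ?_
        rw [sum_comm]
        exact sum_congr rfl fun y' _ => sum_congr rfl fun g _ => by ring
    _ = 2 ^ Fintype.card ι * ∑ y, v y * conj (v y) := by
        simp [sum_boolSign_mul_boolSign, mul_sum]

theorem sum_sum_norm_sq_boolSign_bilinear {m n : Type*} [Fintype m] [DecidableEq m] [Fintype n]
    [DecidableEq n] (A : Matrix m n 𝕜) :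
    ∑ f : n → Bool, ∑ g : m → Bool, ‖∑ x, ∑ y, boolSign (g y) * A y x * boolSign (f x)‖ ^ 2 =
      2 ^ Fintype.card n * 2 ^ Fintype.card m * ∑ y, ∑ x, ‖A y x‖ ^ 2 := by
  have regroup : ∀ (f : n → Bool) (g : m → Bool),
      ∑ x, ∑ y, boolSign (g y) * A y x * boolSign (f x) =
        ∑ y, boolSign (g y) * ∑ x, boolSign (f x) * A y x := by
    intro f g
    rw [sum_comm]
    exact sum_congr rfl fun y _ => by rw [mul_sum]; exact sum_congr rfl fun x _ => by ring
  calc _ = ∑ f : n → Bool, 2 ^ Fintype.card m * ∑ y, ‖∑ x, boolSign (f x) * A y x‖ ^ 2 := by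
        simp_rw [regroup, sum_norm_sq_sum_boolSign_mul]
    _ = 2 ^ Fintype.card m * ∑ y, ∑ f : n → Bool, ‖∑ x, boolSign (f x) * A y x‖ ^ 2 := by
        rw [← mul_sum, sum_comm]
    _ = _ := by
        simp_rw [sum_norm_sq_sum_boolSign_mul, ← mul_sum]
        ring

end Parseval

theorem Matrix.sum_norm_sq_row_of_mem_unitaryGroup {𝕜 n : Type*} [RCLike 𝕜] [Fintype n]
    [DecidableEq n] {U : Matrix n n 𝕜} (hU : U ∈ Matrix.unitaryGroup n 𝕜) (i : n) :
    ∑ j, ‖U i j‖ ^ 2 = 1 := by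
  have hdiag : (U * star U) i i = 1 := by rw [mem_unitaryGroup_iff.mp hU, one_apply_eq]
  simp only [mul_apply, star_apply, ← starRingEnd_apply, RCLike.mul_conj] at hdiag
  exact_mod_cast hdiag

theorem expectation_acceptance_probability_uniform_general
    (N : ℕ) (U : Matrix (Fin N) (Fin N) ℂ)
    (hU : U ∈ Matrix.unitaryGroup (Fin N) ℂ) :
    (1 / ((2 ^ N : ℝ) * (2 ^ N : ℝ))) *
        ∑ f : Fin N → Bool, ∑ g : Fin N → Bool,
          ‖(1 / (N : ℂ)) * ∑ x : Fin N, ∑ y : Fin N,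
              (if g y then (1 : ℂ) else -1) * U y x * (if f x then (1 : ℂ) else -1)‖ ^ 2
      = 1 / (N : ℝ) := by
  have hsum := sum_sum_norm_sq_boolSign_bilinear U
  simp only [Matrix.sum_norm_sq_row_of_mem_unitaryGroup hU, boolSign, sum_const, card_univ,
    Fintype.card_fin, nsmul_eq_mul, mul_one] at hsum
  simp only [norm_mul, mul_pow, ← mul_sum, hsum, norm_div, norm_one, Complex.norm_natCast]
  rcases N.eq_zero_or_pos with rfl | hN
  · simp
  · field_simp

/-- For a unitary `U`, the expectation over independent uniformly random sign
functions `f, g : [N] → {-1,1}` of the acceptance probability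
`p_U(f,g) = |(1/N) ∑_{x,y} g(y) U_{y,x} f(x)|²` equals `1/N`. -/
theorem expectation_acceptance_probability_uniform
    (N : ℕ) (hN : 1 ≤ N) (U : Matrix (Fin N) (Fin N) ℂ)
    (hU : U ∈ Matrix.unitaryGroup (Fin N) ℂ) :
    (1 / ((2 ^ N : ℝ) * (2 ^ N : ℝ))) *
        ∑ f : Fin N → Bool, ∑ g : Fin N → Bool,
          ‖(1 / (N : ℂ)) * ∑ x : Fin N, ∑ y : Fin N,
              (if g y then (1 : ℂ) else -1) * U y x * (if f x then (1 : ℂ) else -1)‖ ^ 2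
      = 1 / (N : ℝ) :=
  expectation_acceptance_probability_uniform_general N U hU
end

section
/- Let μ be a probability measure on U(d) and t ≥ 1, and suppose that for every d^t×d^t complex matrix X, ‖∫ U^{⊗t} X (U^†)^{⊗t} dμ(U) − ∫ U^{⊗t} X (U^†)^{⊗t} dμ_H(U)‖_2 ≤ ε ‖X‖_2, where ‖·‖_2 is the Frobenius norm. Then for every k with 1 ≤ k ≤ t and all index tuples p, q, r, s : [k] → [d], the balanced monomial M(U) := ∏_{a=1}^k U_{p_a,q_a} · ∏_{a=1}^k conj(U_{r_a,s_a}) satisfies |∫ M(U) dμ(U) − ∫ M(U) dμ_H(U)| ≤ d^{2t} ε. -/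
/-!
The monomial is one entry of the moment operator applied to the product test matrix
`X = E_{q₁s₁} ⊗ ⋯ ⊗ E_{q_k s_k} ⊗ 1^{⊗(t-k)}`: conjugation by `U^{⊗t}` acts factorwise, the
factor `U E_{qs} U†` has `(p, r)`-entry `U_{pq} conj U_{rs}`, and `U 1 U† = 1` makes the padding
factors contribute `1`. An entry is bounded by the Frobenius norm, and `‖X‖₂ ≤ d^t` because all
entries of `X` have modulus at most `1`; `‖X‖₂ ≥ 1` forces `ε ≥ 0`.
-/

open MeasureTheory
open scoped BigOperators Matrix

noncomputable instance unitaryGroup.measurableSpace (d : ℕ) :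
    MeasurableSpace (Matrix.unitaryGroup (Fin d) ℂ) := borel _

instance unitaryGroup.borelSpace (d : ℕ) :
    BorelSpace (Matrix.unitaryGroup (Fin d) ℂ) := ⟨rfl⟩

def tensorPow {d : ℕ} (t : ℕ) (A : Matrix (Fin d) (Fin d) ℂ) :
    Matrix (Fin t → Fin d) (Fin t → Fin d) ℂ :=
  fun x y => ∏ a : Fin t, A (x a) (y a)

noncomputable def frobNorm {α : Type*} [Fintype α] (M : Matrix α α ℂ) : ℝ :=
  Real.sqrt (∑ x : α, ∑ y : α, ‖M x y‖ ^ 2)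

/-- The `t`-th moment superoperator of a measure `ν` on `U(d)`:
`G_{ν,t}(X) = ∫ U^{⊗t} X (U†)^{⊗t} dν(U)`, defined entrywise. -/
noncomputable def momentSuper (d t : ℕ) (ν : Measure (Matrix.unitaryGroup (Fin d) ℂ))
    (X : Matrix (Fin t → Fin d) (Fin t → Fin d) ℂ) :
    Matrix (Fin t → Fin d) (Fin t → Fin d) ℂ :=
  fun x y =>
    ∫ U : Matrix.unitaryGroup (Fin d) ℂ,
      (tensorPow t (U : Matrix (Fin d) (Fin d) ℂ) * X *
        (tensorPow t (U : Matrix (Fin d) (Fin d) ℂ))ᴴ) x y ∂ν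

open Matrix

namespace Matrix

variable {ι l m n R : Type*} [Fintype ι]

def piKronecker [CommMonoid R] (A : ι → Matrix m n R) : Matrix (ι → m) (ι → n) R :=
  fun x y => ∏ a, A a (x a) (y a)

@[simp]
theorem piKronecker_apply [CommMonoid R] (A : ι → Matrix m n R) (x : ι → m) (y : ι → n) :
    piKronecker A x y = ∏ a, A a (x a) (y a) := rfl

theorem piKronecker_mul [CommSemiring R] [DecidableEq ι] [Fintype m]
    (A : ι → Matrix l m R) (B : ι → Matrix m n R) :
    piKronecker A * piKronecker B = piKronecker fun a => A a * B a := by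
  ext x y
  simp only [mul_apply, piKronecker_apply, Fintype.prod_sum, Finset.prod_mul_distrib]

theorem conjTranspose_piKronecker [CommSemiring R] [StarRing R] (A : ι → Matrix m n R) :
    (piKronecker A)ᴴ = piKronecker fun a => (A a)ᴴ := by
  ext x y
  simp [conjTranspose_apply, star_prod]

theorem mul_single_one_mul_conjTranspose_apply [Fintype m] [Fintype n] [DecidableEq m]
    [DecidableEq n] [Semiring R] [StarRing R]
    (A : Matrix l m R) (B : Matrix l n R) (i : m) (j : n) (x y : l) :
    (A * single i j (1 : R) * Bᴴ) x y = A x i * star (B y j) := by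
  simp [mul_apply, single, conjTranspose_apply, ite_and]

end Matrix

theorem Fin.prod_dite_lt_of_le {M : Type*} [CommMonoid M] {k t : ℕ} (hkt : k ≤ t)
    (g : Fin k → M) : ∏ a : Fin t, (if h : (a : ℕ) < k then g ⟨a, h⟩ else 1) = ∏ b, g b := by
  rw [Fin.prod_univ_eq_prod_range (fun i => if h : i < k then g ⟨i, h⟩ else 1),
    ← Finset.prod_range_mul_prod_Ico _ hkt, ← Fin.prod_univ_eq_prod_range]
  simp +contextual [Finset.prod_eq_one]

theorem norm_apply_le_frobNorm {α : Type*} [Fintype α] (M : Matrix α α ℂ) (x y : α) :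
    ‖M x y‖ ≤ frobNorm M := by
  have h : ‖M x y‖ ^ 2 ≤ ∑ x' : α, ∑ y' : α, ‖M x' y'‖ ^ 2 :=
    calc ‖M x y‖ ^ 2 ≤ ∑ y' : α, ‖M x y'‖ ^ 2 :=
          Finset.single_le_sum (f := fun y' => ‖M x y'‖ ^ 2) (fun _ _ => by positivity)
            (Finset.mem_univ y)
      _ ≤ _ := Finset.single_le_sum (f := fun x' => ∑ y' : α, ‖M x' y'‖ ^ 2)
            (fun _ _ => by positivity) (Finset.mem_univ x)
  exact Real.le_sqrt_of_sq_le h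

theorem frobNorm_le_card_of_norm_apply_le_one {α : Type*} [Fintype α] (M : Matrix α α ℂ)
    (hM : ∀ x y, ‖M x y‖ ≤ 1) : frobNorm M ≤ Fintype.card α := by
  refine Real.sqrt_le_iff.mpr ⟨by positivity, ?_⟩
  calc ∑ x : α, ∑ y : α, ‖M x y‖ ^ 2 ≤ ∑ _x : α, ∑ _y : α, (1 : ℝ) := by
        gcongr with x _ y _
        exact pow_le_one₀ (norm_nonneg _) (hM x y)
    _ = (Fintype.card α : ℝ) ^ 2 := by simp [sq]

theorem tensorPow_mul_piKronecker_mul_conjTranspose {d t : ℕ} (U : Matrix (Fin d) (Fin d) ℂ)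
    (X : Fin t → Matrix (Fin d) (Fin d) ℂ) :
    tensorPow t U * piKronecker X * (tensorPow t U)ᴴ = piKronecker fun a => U * X a * Uᴴ := by
  rw [show tensorPow t U = piKronecker fun _ => U from rfl, conjTranspose_piKronecker,
    piKronecker_mul, piKronecker_mul]

section MonomialWitness

variable {d k t : ℕ}

def extendTuple {α : Type*} (t : ℕ) (c : α) (p : Fin k → α) : Fin t → α :=
  fun a => if h : (a : ℕ) < k then p ⟨a, h⟩ else c

def monomialWitness (t : ℕ) (q s : Fin k → Fin d) : Fin t → Matrix (Fin d) (Fin d) ℂ :=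
  fun a => if h : (a : ℕ) < k then single (q ⟨a, h⟩) (s ⟨a, h⟩) 1 else 1

theorem frobNorm_piKronecker_monomialWitness_le (q s : Fin k → Fin d) :
    frobNorm (piKronecker (monomialWitness t q s)) ≤ (d : ℝ) ^ t := by
  refine (frobNorm_le_card_of_norm_apply_le_one _ fun x y => ?_).trans_eq (by simp)
  rw [piKronecker_apply, norm_prod]
  refine Finset.prod_le_one (fun _ _ => norm_nonneg _) fun a _ => ?_
  unfold monomialWitness
  split_ifs <;> simp only [single, one_apply, of_apply] <;> split_ifs <;> simp

theorem one_le_frobNorm_piKronecker_monomialWitness (c : Fin d) (q s : Fin k → Fin d) :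
    1 ≤ frobNorm (piKronecker (monomialWitness t q s)) := by
  refine le_of_eq_of_le ?_ (norm_apply_le_frobNorm _ (extendTuple t c q) (extendTuple t c s))
  rw [piKronecker_apply, Finset.prod_eq_one fun a _ => ?_, norm_one]
  unfold monomialWitness extendTuple
  split_ifs <;> simp

theorem conj_monomialWitness_apply_extendTuple (hkt : k ≤ t) (c : Fin d)
    (p q r s : Fin k → Fin d) (U : unitaryGroup (Fin d) ℂ) :
    (tensorPow t (U : Matrix (Fin d) (Fin d) ℂ) * piKronecker (monomialWitness t q s) *
        (tensorPow t (U : Matrix (Fin d) (Fin d) ℂ))ᴴ) (extendTuple t c p) (extendTuple t c r) =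
      (∏ a, (U : Matrix (Fin d) (Fin d) ℂ) (p a) (q a)) *
        ∏ a, starRingEnd ℂ ((U : Matrix (Fin d) (Fin d) ℂ) (r a) (s a)) := by
  rw [tensorPow_mul_piKronecker_mul_conjTranspose, piKronecker_apply, ← Finset.prod_mul_distrib,
    ← Fin.prod_dite_lt_of_le hkt]
  refine Finset.prod_congr rfl fun a _ => ?_
  unfold monomialWitness extendTuple
  split_ifs
  · exact mul_single_one_mul_conjTranspose_apply _ _ _ _ _ _
  · simp [← star_eq_conjTranspose, mem_unitaryGroup_iff.mp U.2]

theorem momentSuper_monomialWitness_apply_extendTuple (hkt : k ≤ t) (c : Fin d)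
    (p q r s : Fin k → Fin d) (ν : Measure (unitaryGroup (Fin d) ℂ)) :
    momentSuper d t ν (piKronecker (monomialWitness t q s)) (extendTuple t c p)
        (extendTuple t c r) =
      ∫ U : unitaryGroup (Fin d) ℂ, (∏ a, (U : Matrix (Fin d) (Fin d) ℂ) (p a) (q a)) *
        ∏ a, starRingEnd ℂ ((U : Matrix (Fin d) (Fin d) ℂ) (r a) (s a)) ∂ν :=
  integral_congr_ae <| .of_forall <| conj_monomialWitness_apply_extendTuple hkt c p q r s

end MonomialWitness

theorem design_implies_monomial_bound_general (d t : ℕ) (ε : ℝ)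
    (μ : Measure (Matrix.unitaryGroup (Fin d) ℂ))
    (μH : Measure (Matrix.unitaryGroup (Fin d) ℂ))
    (hdesign : ∀ X : Matrix (Fin t → Fin d) (Fin t → Fin d) ℂ,
      frobNorm (momentSuper d t μ X - momentSuper d t μH X) ≤ ε * frobNorm X) :
    ∀ (k : ℕ), 1 ≤ k → k ≤ t → ∀ p q r s : Fin k → Fin d,
      ‖(∫ U : Matrix.unitaryGroup (Fin d) ℂ,
            (∏ a : Fin k, (U : Matrix (Fin d) (Fin d) ℂ) (p a) (q a)) *
              (∏ a : Fin k, (starRingEnd ℂ) ((U : Matrix (Fin d) (Fin d) ℂ) (r a) (s a))) ∂μ) -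
          (∫ U : Matrix.unitaryGroup (Fin d) ℂ,
            (∏ a : Fin k, (U : Matrix (Fin d) (Fin d) ℂ) (p a) (q a)) *
              (∏ a : Fin k, (starRingEnd ℂ) ((U : Matrix (Fin d) (Fin d) ℂ) (r a) (s a))) ∂μH)‖
        ≤ (d : ℝ) ^ (2 * t) * ε := by
  intro k hk hkt p q r s
  let c : Fin d := p ⟨0, hk⟩
  have hX_one := one_le_frobNorm_piKronecker_monomialWitness (t := t) c q s
  have hε : 0 ≤ ε :=
    nonneg_of_mul_nonneg_left ((Real.sqrt_nonneg _).trans (hdesign _)) (one_pos.trans_le hX_one)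
  rw [← momentSuper_monomialWitness_apply_extendTuple hkt c _ q _ s μ,
    ← momentSuper_monomialWitness_apply_extendTuple hkt c _ q _ s μH, ← Matrix.sub_apply]
  calc _ ≤ _ := norm_apply_le_frobNorm _ _ _
    _ ≤ ε * frobNorm (piKronecker (monomialWitness t q s)) := hdesign _
    _ ≤ ε * (d : ℝ) ^ t := by gcongr; exact frobNorm_piKronecker_monomialWitness_le q s
    _ ≤ (d : ℝ) ^ (2 * t) * ε := by
      rw [mul_comm]
      gcongr
      · exact_mod_cast c.pos
      · omega

/-- If `μ` is an `ε`-approximate unitary `t`-design (in `2→2` norm), then every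
balanced monomial of degree `k ≤ t` in the entries of `U` and their conjugates has its
`μ`-average within `d^{2t}·ε` of its Haar average. -/
theorem design_implies_monomial_bound (d t : ℕ) (hd : 1 ≤ d) (ht : 1 ≤ t) (ε : ℝ)
    (μ : Measure (Matrix.unitaryGroup (Fin d) ℂ)) [IsProbabilityMeasure μ]
    (μH : Measure (Matrix.unitaryGroup (Fin d) ℂ))
    [μH.IsHaarMeasure] [IsProbabilityMeasure μH]
    (hdesign : ∀ X : Matrix (Fin t → Fin d) (Fin t → Fin d) ℂ,
      frobNorm (momentSuper d t μ X - momentSuper d t μH X) ≤ ε * frobNorm X) :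
    ∀ (k : ℕ), 1 ≤ k → k ≤ t → ∀ p q r s : Fin k → Fin d,
      ‖(∫ U : Matrix.unitaryGroup (Fin d) ℂ,
            (∏ a : Fin k, (U : Matrix (Fin d) (Fin d) ℂ) (p a) (q a)) *
              (∏ a : Fin k, (starRingEnd ℂ) ((U : Matrix (Fin d) (Fin d) ℂ) (r a) (s a))) ∂μ) -
          (∫ U : Matrix.unitaryGroup (Fin d) ℂ,
            (∏ a : Fin k, (U : Matrix (Fin d) (Fin d) ℂ) (p a) (q a)) *
              (∏ a : Fin k, (starRingEnd ℂ) ((U : Matrix (Fin d) (Fin d) ℂ) (r a) (s a))) ∂μH)‖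
        ≤ (d : ℝ) ^ (2 * t) * ε :=
  design_implies_monomial_bound_general d t ε μ μH hdesign
end

section
/- Let N ≥ 3 and let (P_i)_{i ∈ ℤ/N} be d×d complex matrices, each an orthogonal projection (Hermitian with P_i² = P_i), arranged on a ring, such that P_i and P_j commute whenever j ∉ {i−1, i, i+1} (indices mod N). Let H := ∑_{i∈ℤ/N} P_i and suppose 0 is an eigenvalue of H. If c ∈ ℝ is such that for every i ∈ ℤ/N every eigenvalue of P_i + P_{i+1} is either 0 or at least c, then every eigenvalue of H is either 0 or at least 2c − 1. (Equivalently, the spectral gap of H satisfies Δ(H) ≥ 2 min_i Δ(P_i + P_{i+1}) − 1.) -/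
/-!
Knabe's argument. With `H = ∑ Pᵢ` and `Qᵢ = Pᵢ + Pᵢ₊₁`, expanding both squares on the ring gives,
for idempotents `Pᵢ` and `N ≥ 3`,
`H² - (2c - 1) H = ∑ᵢ (Qᵢ² - c Qᵢ) + ∑ᵢ ∑_{j ∉ {i-1, i, i+1}} Pᵢ Pⱼ`.
By the functional calculus, `Qᵢ² - c Qᵢ ≥ 0` says exactly that the spectrum of `Qᵢ ≥ 0` avoids
`(0, c)`, and each `Pᵢ Pⱼ` in the last sum is a product of commuting projections, hence a
projection.
So `H² - (2c - 1) H ≥ 0`, i.e. the spectrum of `H` avoids `(0, 2c - 1)`.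
-/

namespace ZMod

variable {N : ℕ} [NeZero N]

lemma sum_eq_add_add_add_sum_compl {M : Type*} [AddCommMonoid M] (hN : 3 ≤ N) (f : ZMod N → M)
    (i : ZMod N) :
    ∑ j, f j = f (i - 1) + f i + f (i + 1) + ∑ j ∈ {i - 1, i, i + 1}ᶜ, f j := by
  have h1 : (1 : ZMod N) ≠ 0 := by
    simpa using (ZMod.natCast_eq_zero_iff 1 N).not.2 (Nat.not_dvd_of_pos_of_lt one_pos (by omega))
  have h2 : (2 : ZMod N) ≠ 0 := by
    simpa using (ZMod.natCast_eq_zero_iff 2 N).not.2 (Nat.not_dvd_of_pos_of_lt two_pos (by omega))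
  have hne₁ : i - 1 ≠ i := fun h => h1 (sub_eq_self.mp h)
  have hne₂ : i - 1 ≠ i + 1 := fun h => h2 (by linear_combination -h)
  have hne₃ : i ≠ i + 1 := fun h => h1 (left_eq_add.mp h)
  rw [← Finset.sum_add_sum_compl {i - 1, i, i + 1}, Finset.sum_insert (by simp [hne₁, hne₂]),
    Finset.sum_insert (by simp [hne₃]), Finset.sum_singleton]
  simp only [add_assoc]

lemma sum_comp_add_one {M : Type*} [AddCommMonoid M] (f : ZMod N → M) :
    ∑ i, f (i + 1) = ∑ i, f i :=
  Equiv.sum_comp (Equiv.addRight 1) f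

variable {R : Type*}

lemma sum_mul_sum_add_sum_mul_self [NonUnitalNonAssocSemiring R] (hN : 3 ≤ N) (f : ZMod N → R) :
    (∑ i, f i) * (∑ i, f i) + ∑ i, f i * f i =
      ∑ i, (f i + f (i + 1)) * (f i + f (i + 1)) + ∑ i, ∑ j ∈ {i - 1, i, i + 1}ᶜ, f i * f j := by
  have hback : ∑ i, f i * f (i - 1) = ∑ i, f (i + 1) * f i := by
    simpa using (sum_comp_add_one fun i => f i * f (i - 1)).symm
  have hexpand : (∑ i, f i) * (∑ i, f i) = ∑ i, f i * f (i - 1) + ∑ i, f i * f i +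
      ∑ i, f i * f (i + 1) + ∑ i, ∑ j ∈ {i - 1, i, i + 1}ᶜ, f i * f j := by
    simp only [Finset.sum_mul_sum, ← Finset.sum_add_distrib]
    exact Finset.sum_congr rfl fun i _ => sum_eq_add_add_add_sum_compl hN (fun j => f i * f j) i
  have hpairs : ∑ i, (f i + f (i + 1)) * (f i + f (i + 1)) = ∑ i, f i * f i +
      ∑ i, f i * f (i + 1) + ∑ i, f (i + 1) * f i + ∑ i, f i * f i := by
    simp only [mul_add, add_mul, Finset.sum_add_distrib, sum_comp_add_one fun i => f i * f i]
    abel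
  rw [hexpand, hpairs, hback]
  abel

lemma sum_mul_sum_sub_smul_eq {𝕜 : Type*} [CommRing 𝕜] [Ring R] [Module 𝕜 R] (hN : 3 ≤ N)
    (P : ZMod N → R) (hP : ∀ i, IsIdempotentElem (P i)) (c : 𝕜) :
    (∑ i, P i) * (∑ i, P i) - (2 * c - 1) • ∑ i, P i =
      ∑ i, ((P i + P (i + 1)) * (P i + P (i + 1)) - c • (P i + P (i + 1))) +
        ∑ i, ∑ j ∈ {i - 1, i, i + 1}ᶜ, P i * P j := by
  have hsq := sum_mul_sum_add_sum_mul_self hN P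
  have hidem : ∑ i, P i * P i = ∑ i, P i := Finset.sum_congr rfl fun i _ => hP i
  have hpair : ∑ i, (P i + P (i + 1)) = ∑ i, P i + ∑ i, P i := by
    rw [Finset.sum_add_distrib, sum_comp_add_one]
  rw [hidem] at hsq
  rw [Finset.sum_sub_distrib, ← Finset.smul_sum, hpair, eq_sub_of_add_eq hsq.symm]
  module

end ZMod

section SpectralGap

variable {A : Type*} [Ring A] [StarRing A] [PartialOrder A] [StarOrderedRing A] [TopologicalSpace A]
  [Algebra ℝ A] [ContinuousFunctionalCalculus ℝ A IsSelfAdjoint] [NonnegSpectrumClass ℝ A]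

lemma mul_self_sub_smul_nonneg_iff {a : A} (ha : 0 ≤ a) (c : ℝ) :
    0 ≤ a * a - c • a ↔ ∀ t ∈ spectrum ℝ a, t = 0 ∨ c ≤ t := by
  have hcfc : a * a - c • a = cfc (fun t => t * t - c * t) a := by
    rw [cfc_sub .., cfc_mul .., cfc_const_mul .., cfc_id' ..]
  rw [hcfc, cfc_nonneg_iff ..]
  refine forall₂_congr fun t ht => ?_
  rcases (spectrum_nonneg_of_nonneg ha ht).eq_or_lt with rfl | ht_pos
  · simp
  · rw [← sub_mul, mul_nonneg_iff_of_pos_right ht_pos, sub_nonneg]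
    simp [ht_pos.ne']

lemma eq_zero_or_two_mul_sub_one_le_of_mem_spectrum_sum {N : ℕ} [NeZero N] (hN : 3 ≤ N)
    (P : ZMod N → A) (hP : ∀ i, IsStarProjection (P i))
    (hcomm : ∀ i j : ZMod N, j ≠ i - 1 → j ≠ i → j ≠ i + 1 → Commute (P i) (P j)) (c : ℝ)
    (hgap : ∀ i, ∀ t ∈ spectrum ℝ (P i + P (i + 1)), t = 0 ∨ c ≤ t) :
    ∀ t ∈ spectrum ℝ (∑ i, P i), t = 0 ∨ 2 * c - 1 ≤ t := by
  have hP0 : ∀ i, 0 ≤ P i := fun i => (hP i).nonneg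
  rw [← mul_self_sub_smul_nonneg_iff (Finset.sum_nonneg fun i _ => hP0 i),
    ZMod.sum_mul_sum_sub_smul_eq hN P fun i => (hP i).isIdempotentElem]
  refine add_nonneg (Finset.sum_nonneg fun i _ => ?_)
    (Finset.sum_nonneg fun i _ => Finset.sum_nonneg fun j hj => ?_)
  · exact (mul_self_sub_smul_nonneg_iff (add_nonneg (hP0 i) (hP0 (i + 1))) c).2 (hgap i)
  · simp only [Finset.mem_compl, Finset.mem_insert, Finset.mem_singleton, not_or] at hj
    exact ((hP i).mul (hP j) (hcomm i j hj.1 hj.2.1 hj.2.2)).nonneg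

end SpectralGap

namespace Matrix

variable {n 𝕜 : Type*} [Fintype n] [DecidableEq n] [RCLike 𝕜]

lemma mem_spectrum_real_iff_exists_mulVec_eq_smul {M : Matrix n n 𝕜} {x : ℝ} :
    x ∈ spectrum ℝ M ↔ ∃ v : n → 𝕜, v ≠ 0 ∧ M *ᵥ v = (x : 𝕜) • v := by
  rw [← spectrum.algebraMap_mem_iff 𝕜, ← spectrum_toLin',
    ← Module.End.hasEigenvalue_iff_mem_spectrum]
  constructor
  · intro h
    obtain ⟨v, hv⟩ := h.exists_hasEigenvector
    exact ⟨v, hv.2, by simpa using hv.apply_eq_smul⟩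
  · rintro ⟨v, hv0, hv⟩
    exact Module.End.hasEigenvalue_of_hasEigenvector
      ⟨by simpa [Module.End.mem_eigenspace_iff] using hv, hv0⟩

end Matrix

theorem ring_hamiltonian_gap_general
    {N d : ℕ} [NeZero N] (hN : 3 ≤ N)
    (P : ZMod N → Matrix (Fin d) (Fin d) ℂ)
    (hherm : ∀ i, (P i).IsHermitian)
    (hproj : ∀ i, P i * P i = P i)
    (hcomm : ∀ i j : ZMod N, j ≠ i - 1 → j ≠ i → j ≠ i + 1 → Commute (P i) (P j))
    (c : ℝ)
    (hgap : ∀ (i : ZMod N) (x : ℝ),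
      (∃ v : Fin d → ℂ, v ≠ 0 ∧ (P i + P (i + 1)).mulVec v = (x : ℂ) • v) → x = 0 ∨ c ≤ x) :
    ∀ x : ℝ,
      (∃ v : Fin d → ℂ, v ≠ 0 ∧ (∑ i, P i).mulVec v = (x : ℂ) • v) →
        x = 0 ∨ 2 * c - 1 ≤ x := by
  intro x hx
  open scoped MatrixOrder in
  exact eq_zero_or_two_mul_sub_one_le_of_mem_spectrum_sum hN P (fun i => ⟨hproj i, hherm i⟩)
    hcomm c (fun i t ht => hgap i t (Matrix.mem_spectrum_real_iff_exists_mulVec_eq_smul.mp ht)) x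
    (Matrix.mem_spectrum_real_iff_exists_mulVec_eq_smul.mpr hx)

/-- Spectral-gap lemma for frustration-free local Hamiltonians on a ring.
If `(P_i)_{i ∈ ℤ/N}` are projectors with non-adjacent ones commuting, `H = ∑ i, P i` has `0`
as an eigenvalue, and every eigenvalue of each `P_i + P_{i+1}` is `0` or at least `c`, then
every eigenvalue of `H` is `0` or at least `2c - 1`. -/
theorem ring_hamiltonian_gap
    {N d : ℕ} [NeZero N] (hN : 3 ≤ N)
    (P : ZMod N → Matrix (Fin d) (Fin d) ℂ)
    (hherm : ∀ i, (P i).IsHermitian)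
    (hproj : ∀ i, P i * P i = P i)
    (hcomm : ∀ i j : ZMod N, j ≠ i - 1 → j ≠ i → j ≠ i + 1 → Commute (P i) (P j))
    (hker : ∃ v : Fin d → ℂ, v ≠ 0 ∧ (∑ i, P i).mulVec v = 0)
    (c : ℝ)
    (hgap : ∀ (i : ZMod N) (x : ℝ),
      (∃ v : Fin d → ℂ, v ≠ 0 ∧ (P i + P (i + 1)).mulVec v = (x : ℂ) • v) → x = 0 ∨ c ≤ x) :
    ∀ x : ℝ,
      (∃ v : Fin d → ℂ, v ≠ 0 ∧ (∑ i, P i).mulVec v = (x : ℂ) • v) →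
        x = 0 ∨ 2 * c - 1 ≤ x :=
  ring_hamiltonian_gap_general hN P hherm hproj hcomm c hgap
end

section
/- Let N ≥ 3 and let (P_i)_{i ∈ ℤ/N} be d×d complex matrices, each an orthogonal projection (Hermitian with P_i² = P_i), such that P_i and P_j commute whenever j ∉ {i−1, i, i+1} (indices mod N). Let c ∈ ℝ and suppose that for every i ∈ ℤ/N the matrix (P_i + P_{i+1})² − c·(P_i + P_{i+1}) is positive semidefinite. Then, with H := ∑_{i∈ℤ/N} P_i, the matrix H² − (2c − 1)·H is positive semidefinite. -/
open scoped BigOperators Matrix ComplexOrder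

lemma posSemidef_sum' {n : Type*} [Fintype n] [DecidableEq n] {ι : Type*} (s : Finset ι)
    (f : ι → Matrix n n ℂ) (h : ∀ i ∈ s, (f i).PosSemidef) :
    (∑ i ∈ s, f i).PosSemidef := by
  classical
  induction s using Finset.cons_induction with
  | empty => simpa using (Matrix.PosSemidef.zero : (0 : Matrix n n ℂ).PosSemidef)
  | cons a s ha ih =>
    rw [Finset.sum_cons]
    exact (h a (Finset.mem_cons_self a s)).add (ih fun i hi => h i (Finset.mem_cons.2 (Or.inr hi)))

/-- The operator inequality at the heart of the local spectral-gap lemma.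
If `(P_i)_{i ∈ ℤ/N}` are projectors with non-adjacent ones commuting and
`(P_i + P_{i+1})² - c(P_i + P_{i+1}) ⪰ 0` for all `i`, then with `H = ∑ i, P i` one has
`H² - (2c - 1)H ⪰ 0`. -/
theorem ring_hamiltonian_operator_inequality
    {N d : ℕ} [NeZero N] (hN : 3 ≤ N)
    (P : ZMod N → Matrix (Fin d) (Fin d) ℂ)
    (hherm : ∀ i, (P i).IsHermitian)
    (hproj : ∀ i, P i * P i = P i)
    (hcomm : ∀ i j : ZMod N, j ≠ i - 1 → j ≠ i → j ≠ i + 1 → Commute (P i) (P j))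
    (c : ℝ)
    (hloc : ∀ i : ZMod N,
      ((P i + P (i + 1)) * (P i + P (i + 1)) - (c : ℂ) • (P i + P (i + 1))).PosSemidef) :
    ((∑ i, P i) * (∑ i, P i) - ((2 * c - 1 : ℝ) : ℂ) • (∑ i, P i)).PosSemidef := by
  classical
  haveI : Fact (1 < N) := ⟨by omega⟩
  set S := ∑ i, P i with hSdef
  have h1 : (1 : ZMod N) ≠ 0 := one_ne_zero
  have h2 : (2 : ZMod N) ≠ 0 := by
    intro h
    have h' : ((2 : ℕ) : ZMod N) = 0 := by exact_mod_cast h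
    have hd := (ZMod.natCast_eq_zero_iff 2 N).mp h'
    have := Nat.le_of_dvd (by norm_num) hd
    omega
  -- positivity of each projector
  have hP : ∀ i, (P i).PosSemidef := by
    intro i
    have := Matrix.posSemidef_conjTranspose_mul_self (P i)
    rwa [hherm i, hproj i] at this
  -- the inner split of the double sum
  have inner : ∀ i : ZMod N, ∑ j, P i * P j
      = P i * P (i - 1) + P i + P i * P (i + 1)
        + ∑ j ∈ Finset.univ.filter (fun j => ¬(j = i - 1 ∨ j = i ∨ j = i + 1)), P i * P j := by
    intro i
    have hd1 : i - 1 ≠ i := by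
      intro h; exact h1 (by linear_combination -h)
    have hd2 : i - 1 ≠ i + 1 := by
      intro h; exact h2 (by linear_combination -h)
    have hd3 : i ≠ i + 1 := by
      intro h; exact h1 (by linear_combination -h)
    rw [← Finset.sum_filter_add_sum_filter_not Finset.univ
      (fun j => j = i - 1 ∨ j = i ∨ j = i + 1)]
    have hset : Finset.univ.filter (fun j => j = i - 1 ∨ j = i ∨ j = i + 1)
        = {i - 1, i, i + 1} := by
      ext x; simp [Finset.mem_insert]
    rw [hset, Finset.sum_insert (by simp [hd1, hd2]),
      Finset.sum_insert (by simp [hd3]), Finset.sum_singleton, hproj]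
    abel
  -- reindexing lemmas
  have r1 : ∑ i : ZMod N, P (i + 1) = S := by
    rw [hSdef]
    exact Fintype.sum_equiv (Equiv.addRight (1 : ZMod N)) _ _ (fun i => rfl)
  have r2 : ∑ i : ZMod N, P (i + 1) * P i = ∑ i : ZMod N, P i * P (i - 1) := by
    refine Fintype.sum_equiv (Equiv.addRight (1 : ZMod N)) _ _ (fun i => ?_)
    simp
  have rc : ∑ i : ZMod N, (c : ℂ) • P (i + 1) = (c : ℂ) • S := by
    rw [hSdef, Finset.smul_sum]
    exact Fintype.sum_equiv (Equiv.addRight (1 : ZMod N)) _ _ (fun i => rfl)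
  -- expand the local terms
  have expand : ∀ i : ZMod N,
      (P i + P (i + 1)) * (P i + P (i + 1)) - (c : ℂ) • (P i + P (i + 1))
        = P i + P (i + 1) + P i * P (i + 1) + P (i + 1) * P i
          - (c : ℂ) • P i - (c : ℂ) • P (i + 1) := by
    intro i
    rw [add_mul, mul_add, mul_add, hproj, hproj, smul_add]
    abel
  -- the key algebraic identity
  have hL : ∑ i, ((P i + P (i + 1)) * (P i + P (i + 1)) - (c : ℂ) • (P i + P (i + 1)))
      = S + S + (∑ i, P i * P (i + 1)) + (∑ i, P i * P (i - 1))
        - (c : ℂ) • S - (c : ℂ) • S := by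
    rw [Finset.sum_congr rfl (fun i _ => expand i)]
    simp only [Finset.sum_sub_distrib, Finset.sum_add_distrib]
    rw [r1, r2, rc, ← Finset.smul_sum, ← hSdef]
  have hS2 : S * S = (∑ i, P i * P (i - 1)) + S + (∑ i, P i * P (i + 1))
      + ∑ i, ∑ j ∈ Finset.univ.filter (fun j => ¬(j = i - 1 ∨ j = i ∨ j = i + 1)),
          P i * P j := by
    rw [hSdef, Finset.sum_mul_sum, Finset.sum_congr rfl (fun i _ => inner i)]
    simp only [Finset.sum_add_distrib]
  have key : S * S - ((2 * c - 1 : ℝ) : ℂ) • S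
      = (∑ i, ((P i + P (i + 1)) * (P i + P (i + 1)) - (c : ℂ) • (P i + P (i + 1))))
        + ∑ i, ∑ j ∈ Finset.univ.filter (fun j => ¬(j = i - 1 ∨ j = i ∨ j = i + 1)),
            P i * P j := by
    rw [hS2, hL]
    have : ((2 * c - 1 : ℝ) : ℂ) = 2 * (c : ℂ) - 1 := by push_cast; ring
    rw [this]
    module
  rw [key]
  apply Matrix.PosSemidef.add
  · exact posSemidef_sum' _ _ (fun i _ => hloc i)
  · refine posSemidef_sum' _ _ (fun i _ => posSemidef_sum' _ _ (fun j hj => ?_))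
    simp only [Finset.mem_filter, Finset.mem_univ, true_and] at hj
    push_neg at hj
    obtain ⟨hj1, hj2, hj3⟩ := hj
    have hc := hcomm i j hj1 hj2 hj3
    have heq : (P j)ᴴ * P i * P j = P i * P j := by
      rw [hherm j, ← hc.eq, mul_assoc, hproj]
    exact heq ▸ (hP i).conjTranspose_mul_mul_same (P j)
end
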